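/- Let 𝓗 be a complex Hilbert space (inner product conjugate-linear in the first variable), H and A bounded linear operators on 𝓗 with H self-adjoint, λ ∈ ℝ, t > 0, and f ∈ 𝓗. Then H − (λ + it)·I is invertible, and with u = (H − (λ+it))⁻¹ f one has ⟨u, i(A*A H − H A*A) u⟩ = −2 Im⟨u, A*A f⟩ − 2t ‖A u‖². -/

import Mathlib

/-!
Since `H` is self-adjoint its spectrum is real, so `H - (λ + it)` is invertible for `t ≠ 0`.
For self-adjoint `B = A*A` and `H`, the form `⟨u, HBu⟩` is the complex conjugate of `⟨u, BHu⟩`,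
so `⟨u, i[B, H]u⟩ = -2 Im⟨u, BHu⟩`. Substituting `Hu = f + (λ + it)u` and `⟨u, Bu⟩ = ‖Au‖²`
splits the imaginary part into `Im⟨u, Bf⟩ + t‖Au‖²`.
-/

open ContinuousLinearMap Complex

theorem IsSelfAdjoint.isUnit_sub_smul_one {A : Type*} [CStarAlgebra A] {a : A}
    (ha : IsSelfAdjoint a) {z : ℂ} (hz : z.im ≠ 0) : IsUnit (a - z • 1) := by
  have hz : z ∉ spectrum ℂ a := fun h => hz (ha.im_eq_zero_of_mem_spectrum h)
  simpa [Algebra.algebraMap_eq_smul_one] using (spectrum.notMem_iff.mp hz).neg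

namespace ContinuousLinearMap

section

variable {𝕜 E : Type*} [RCLike 𝕜] [NormedAddCommGroup E] [InnerProductSpace 𝕜 E] [CompleteSpace E]

theorem inner_adjoint_mul_self_apply (A : E →L[𝕜] E) (u : E) :
    inner 𝕜 u ((adjoint A * A) u) = (‖A u‖ ^ 2 : 𝕜) := by
  rw [mul_apply_eq_comp, adjoint_inner_right, inner_self_eq_norm_sq_to_K]

theorem inner_mul_apply_self_eq_conj {B H : E →L[𝕜] E} (hB : IsSelfAdjoint B)
    (hH : IsSelfAdjoint H) (u : E) :
    inner 𝕜 u ((H * B) u) = starRingEnd 𝕜 (inner 𝕜 u ((B * H) u)) := by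
  calc inner 𝕜 u (H (B u)) = inner 𝕜 (H u) (B u) := (hH.isSymmetric u (B u)).symm
    _ = starRingEnd 𝕜 (inner 𝕜 (B u) (H u)) := (inner_conj_symm _ _).symm
    _ = starRingEnd 𝕜 (inner 𝕜 u (B (H u))) := congrArg _ (hB.isSymmetric u (H u))

end

variable {E : Type*} [NormedAddCommGroup E] [InnerProductSpace ℂ E] [CompleteSpace E]

theorem inner_I_smul_commutator_self {B H : E →L[ℂ] E} (hB : IsSelfAdjoint B)
    (hH : IsSelfAdjoint H) (u : E) :
    inner ℂ u ((I • (B * H - H * B)) u) = ((-2 * (inner ℂ u ((B * H) u)).im : ℝ) : ℂ) := by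
  rw [smul_apply, sub_apply, inner_smul_right, inner_sub_right,
    inner_mul_apply_self_eq_conj hB hH, sub_conj]
  generalize inner ℂ u ((B * H) u) = w
  push_cast
  linear_combination (2 * w.im : ℂ) * I_sq

end ContinuousLinearMap

/-- Energy identity for the positive commutator method: if `H` is a bounded self-adjoint
operator on a complex Hilbert space, `A` bounded, `λ ∈ ℝ`, `t > 0`, `f ∈ 𝓗`, then
`H − (λ+it)` is invertible and, for `u = (H−(λ+it))⁻¹ f`,
`⟨u, i(A*A H − H A*A) u⟩ = −2 Im⟨u, A*A f⟩ − 2t‖Au‖²`. -/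
theorem energy_identity
    {𝓗 : Type*} [NormedAddCommGroup 𝓗] [InnerProductSpace ℂ 𝓗] [CompleteSpace 𝓗]
    (H A : 𝓗 →L[ℂ] 𝓗) (hH : IsSelfAdjoint H)
    (lam t : ℝ) (ht : 0 < t) (f : 𝓗) :
    IsUnit (H - ((lam : ℂ) + (t : ℂ) * Complex.I) • (1 : 𝓗 →L[ℂ] 𝓗)) ∧
    ∀ u : 𝓗, (H - ((lam : ℂ) + (t : ℂ) * Complex.I) • (1 : 𝓗 →L[ℂ] 𝓗)) u = f →
      (inner ℂ u ((Complex.I • (adjoint A * A * H - H * (adjoint A * A))) u) : ℂ) =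
        ((-2 * (inner ℂ u ((adjoint A * A) f) : ℂ).im - 2 * t * ‖A u‖ ^ 2 : ℝ) : ℂ) := by
  set z : ℂ := (lam : ℂ) + (t : ℂ) * Complex.I
  have hz : z.im = t := by simp [z]
  refine ⟨hH.isUnit_sub_smul_one (hz ▸ ht.ne'), fun u hu => ?_⟩
  have hHu : H u = f + z • u := by
    rw [← hu]
    simp
  have hB : IsSelfAdjoint (adjoint A * A) := IsSelfAdjoint.star_mul_self A
  rw [inner_I_smul_commutator_self hB hH, mul_apply_eq_comp, hHu, map_add,
    map_smul, inner_add_right, inner_smul_right, inner_adjoint_mul_self_apply,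
    ← RCLike.ofReal_pow, RCLike.ofReal_eq_complex_ofReal, add_im, im_mul_ofReal, hz]
  push_cast
  ring
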